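/- The category whose objects are Dirichlet functors and whose morphisms are cartesian natural transformations is equivalent to the category whose objects are functions between finite sets and whose morphisms π → π′ are commutative squares from π to π′ that are pullback squares. -/

import Mathlib

/- STATEMENT 7: The category whose objects are Dirichlet functors and whose morphisms are
cartesian natural transformations is equivalent to the category whose objects are functions
between finite sets and whose morphisms `π → π′` are commutative squares from `π` to `π′`
that are pullback squares. -/

open CategoryTheory CategoryTheory.Limits Opposite

noncomputable section

noncomputable instance (X Y : FintypeCat.{0}) : Fintype (X ⟶ Y) := by
  classical exact Fintype.ofFinite (X ⟶ Y)

/-- The finite coproduct `∐ᵢ Fin(–, dᵢ)` of representable presheaves `FintypeCatᵒᵖ ⥤ FintypeCat`. -/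
def dirichletSum {I : Type} [Fintype I] (d : I → FintypeCat.{0}) :
    FintypeCat.{0}ᵒᵖ ⥤ FintypeCat.{0} where
  obj X := FintypeCat.of (Σ i, (X.unop ⟶ d i))
  map f := FintypeCat.homMk (fun x => ⟨x.1, f.unop ≫ x.2⟩)

/-- A Dirichlet functor is a finite coproduct of representable presheaves. -/
def IsDirichlet (D : FintypeCat.{0}ᵒᵖ ⥤ FintypeCat.{0}) : Prop :=
  ∃ (I : Type) (_ : Fintype I) (d : I → FintypeCat.{0}), Nonempty (D ≅ dirichletSum d)

/-- A natural transformation is cartesian when all of its naturality squares are pullbacks. -/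
def Cartesian {C D : Type*} [Category C] [Category D] {F G : C ⥤ D} (f : F ⟶ G) : Prop :=
  ∀ ⦃X Y : C⦄ (g : X ⟶ Y), IsPullback (f.app X) (F.map g) (G.map g) (f.app Y)

/-- Objects: Dirichlet functors. -/
structure DirCart where
  func : FintypeCat.{0}ᵒᵖ ⥤ FintypeCat.{0}
  isDir : IsDirichlet func

/-- The category of Dirichlet functors and cartesian natural transformations. -/
instance : Category DirCart where
  Hom A B := {f : A.func ⟶ B.func // Cartesian f}
  id A := ⟨𝟙 A.func, fun X Y g => by
    simp only [NatTrans.id_app]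
    exact IsPullback.of_horiz_isIso ⟨by simp⟩⟩
  comp f g := ⟨f.1 ≫ g.1, fun X Y h => by
    simp only [NatTrans.comp_app]
    exact (f.2 h).paste_horiz (g.2 h)⟩
  id_comp f := Subtype.ext (Category.id_comp _)
  comp_id f := Subtype.ext (Category.comp_id _)
  assoc f g h := Subtype.ext (Category.assoc _ _ _)

/-- Objects: functions between finite sets (arrows in `FintypeCat`). -/
structure BunCart where
  arr : Arrow FintypeCat.{0}

/-- The category of functions between finite sets and pullback squares. -/
instance : Category BunCart where
  Hom A B := {f : A.arr ⟶ B.arr // IsPullback f.left A.arr.hom B.arr.hom f.right}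
  id A := ⟨𝟙 A.arr, by
    simp only [Arrow.id_left, Arrow.id_right]
    exact IsPullback.of_horiz_isIso ⟨by simp⟩⟩
  comp f g := ⟨f.1 ≫ g.1, by
    simp only [Arrow.comp_left, Arrow.comp_right]
    exact f.2.paste_horiz g.2⟩
  id_comp f := Subtype.ext (Category.id_comp _)
  comp_id f := Subtype.ext (Category.comp_id _)
  assoc f g h := Subtype.ext (Category.assoc _ _ _)

/-!
Restricting along `∅ → 1` sends a presheaf `D` to its bundle `D(1) → D(∅)`; for
`D = ∐ᵢ Fin(–, dᵢ)` this is the projection `∐ᵢ dᵢ → I`. Conversely a map `π : E → B` gives the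
Dirichlet functor `∐_{b ∈ B} Fin(–, π⁻¹ b)`, and a pullback square gives a cartesian
transformation because it restricts to bijections between the fibres. The bundle of
`∐_b Fin(–, π⁻¹ b)` is `π` again, and every presheaf `D` maps to the Dirichlet functor of its
bundle by sending `z ∈ D(X)` to its restriction to `∅` together with its restrictions to the
points of `X`; this is a bijection when `D` is a coproduct of representables.
-/

universe u

lemma FintypeCat.isPullback_iff {P X Y Z : FintypeCat.{u}} (fst : P ⟶ X) (snd : P ⟶ Y)
    (f : X ⟶ Z) (g : Y ⟶ Z) :
    IsPullback fst snd f g ↔ fst ≫ f = snd ≫ g ∧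
      (∀ p q, fst p = fst q ∧ snd p = snd q → p = q) ∧
      ∀ x y, f x = g y → ∃ p, fst p = x ∧ snd p = y := by
  refine ⟨fun h => ⟨h.w, ((Types.isPullback_iff _ _ _ _).1 (h.map FintypeCat.incl)).2⟩,
    fun h => (IsPullback.map_iff FintypeCat.incl h.1).1 ?_⟩
  exact (Types.isPullback_iff _ _ _ _).2 ⟨FintypeCat.incl.congr_map h.1, h.2⟩

namespace Dirichlet

abbrev pt : FintypeCat.{0} := FintypeCat.of PUnit

abbrev empty : FintypeCat.{0} := FintypeCat.of PEmpty

def fromEmpty (X : FintypeCat.{0}) : empty ⟶ X := FintypeCat.homMk PEmpty.elim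

lemma fromEmpty_ext {X : FintypeCat.{0}} (f g : empty ⟶ X) : f = g :=
  FintypeCat.hom_ext _ _ fun e => e.elim

def const {X : FintypeCat.{0}} (x : X) : pt ⟶ X := FintypeCat.homMk fun _ => x

def bundle : (FintypeCat.{0}ᵒᵖ ⥤ FintypeCat.{0}) ⥤ Arrow FintypeCat.{0} where
  obj D := Arrow.mk (D.map (fromEmpty pt).op)
  map f := Arrow.homMk (f.app _) (f.app _) (f.naturality _).symm

def fiber (π : Arrow FintypeCat.{0}) (b : π.right) : FintypeCat.{0} :=
  FintypeCat.of {e // π.hom e = b}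

def fiberMap {π π' : Arrow FintypeCat.{0}} (f : π ⟶ π') (b : π.right) :
    fiber π b ⟶ fiber π' (f.right b) :=
  FintypeCat.homMk fun e => ⟨f.left e.1,
    (ConcreteCategory.congr_hom f.w e.1).trans (congrArg f.right e.2)⟩

lemma isIso_fiberMap {π π' : Arrow FintypeCat.{0}} (f : π ⟶ π')
    (hf : IsPullback f.left π.hom π'.hom f.right) (b : π.right) : IsIso (fiberMap f b) := by
  obtain ⟨-, huniq, hex⟩ := (FintypeCat.isPullback_iff _ _ _ _).1 hf
  refine (ConcreteCategory.isIso_iff_bijective _).2 ⟨fun e e' h => ?_, fun e' => ?_⟩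
  · exact Subtype.ext (huniq _ _ ⟨congrArg Subtype.val h, e.2.trans e'.2.symm⟩)
  · obtain ⟨e, he, hb⟩ := hex e'.1 b e'.2
    exact ⟨⟨e, hb⟩, Subtype.ext he⟩

section Sum

variable {I I' : Type} [Fintype I] [Fintype I'] {d : I → FintypeCat.{0}}
  {d' : I' → FintypeCat.{0}}

def dirichletSumMap (σ : I → I') (e : ∀ i, d i ⟶ d' (σ i)) :
    dirichletSum d ⟶ dirichletSum d' where
  app X := FintypeCat.homMk fun z => ⟨σ z.1, z.2 ≫ e z.1⟩

lemma dirichletSumMap_cartesian (σ : I → I') (e : ∀ i, d i ⟶ d' (σ i)) [∀ i, IsIso (e i)] :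
    Cartesian (dirichletSumMap σ e) := by
  intro X Y g
  refine (FintypeCat.isPullback_iff _ _ _ _).2 ⟨(dirichletSumMap σ e).naturality g, ?_, ?_⟩
  · rintro ⟨i, s⟩ ⟨j, t⟩ ⟨hst, hi⟩
    obtain rfl : i = j := congrArg Sigma.fst hi
    have : s = t := (cancel_mono (e i)).1 (eq_of_heq (Sigma.mk.inj_iff.1 hst).2)
    rw [this]
  · rintro ⟨j, s'⟩ ⟨i, t⟩ h
    obtain ⟨rfl, h⟩ := Sigma.mk.inj_iff.1 h
    refine ⟨⟨i, s' ≫ inv (e i)⟩, ?_, ?_⟩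
    · show (⟨σ i, (s' ≫ inv (e i)) ≫ e i⟩ : (dirichletSum d').obj X) = ⟨σ i, s'⟩
      simp
    · show (⟨i, g.unop ≫ s' ≫ inv (e i)⟩ : (dirichletSum d).obj Y) = ⟨i, t⟩
      have h : g.unop ≫ s' = t ≫ e i := eq_of_heq h
      rw [← Category.assoc, h]
      simp

end Sum

section OfBundle

attribute [local instance] FintypeCat.fintype

def ofBundle : Arrow FintypeCat.{0} ⥤ (FintypeCat.{0}ᵒᵖ ⥤ FintypeCat.{0}) where
  obj π := dirichletSum (fiber π)
  map f := dirichletSumMap f.right (fiberMap f)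

lemma ofBundle_map_cartesian {π π' : Arrow FintypeCat.{0}} (f : π ⟶ π')
    (hf : IsPullback f.left π.hom π'.hom f.right) : Cartesian (ofBundle.map f) :=
  have := isIso_fiberMap f hf
  dirichletSumMap_cartesian _ _

lemma isDirichlet_ofBundle_obj (π : Arrow FintypeCat.{0}) : IsDirichlet (ofBundle.obj π) :=
  ⟨π.right, inferInstance, fiber π, ⟨Iso.refl _⟩⟩

lemma ofBundle_obj_ext {π : Arrow FintypeCat.{0}} {X : FintypeCat.{0}ᵒᵖ} {b b' : π.right}
    {s : X.unop ⟶ fiber π b} {s' : X.unop ⟶ fiber π b'} (hb : b = b')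
    (hs : ∀ x, (s x).1 = (s' x).1) :
    (⟨b, s⟩ : (ofBundle.obj π).obj X) = ⟨b', s'⟩ := by
  subst hb
  exact congrArg _ (FintypeCat.hom_ext _ _ fun x => Subtype.ext (hs x))

def ofBundleObjPtEquiv (π : Arrow FintypeCat.{0}) :
    (ofBundle.obj π).obj (op pt) ≃ π.left where
  toFun z := (z.2 PUnit.unit).1
  invFun e := ⟨π.hom e, const ⟨e, rfl⟩⟩
  left_inv z := ofBundle_obj_ext (z.2 PUnit.unit).2 fun _ => rfl
  right_inv _ := rfl

def ofBundleObjEmptyEquiv (π : Arrow FintypeCat.{0}) :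
    (ofBundle.obj π).obj (op empty) ≃ π.right where
  toFun z := z.1
  invFun b := ⟨b, fromEmpty _⟩
  left_inv _ := ofBundle_obj_ext rfl fun e => e.elim
  right_inv _ := rfl

def ofBundleCompBundle : ofBundle ⋙ bundle ≅ 𝟭 (Arrow FintypeCat.{0}) :=
  NatIso.ofComponents (fun π => Arrow.isoMk
    (FintypeCat.equivEquivIso (ofBundleObjPtEquiv π))
    (FintypeCat.equivEquivIso (ofBundleObjEmptyEquiv π))
    (FintypeCat.hom_ext _ _ fun z => (z.2 PUnit.unit).2))
    (fun _ => rfl)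

lemma map_fromEmpty_map (D : FintypeCat.{0}ᵒᵖ ⥤ FintypeCat.{0}) {X Y : FintypeCat.{0}}
    (f : Y ⟶ X) (z : D.obj (op X)) :
    D.map (fromEmpty Y).op (D.map f.op z) = D.map (fromEmpty X).op z := by
  rw [← FintypeCat.comp_apply, ← D.map_comp, ← op_comp, fromEmpty_ext (fromEmpty Y ≫ f)]

lemma map_const_map (D : FintypeCat.{0}ᵒᵖ ⥤ FintypeCat.{0}) {X Y : FintypeCat.{0}}
    (f : Y ⟶ X) (y : Y) (z : D.obj (op X)) :
    D.map (const y).op (D.map f.op z) = D.map (const (f y)).op z := by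
  rw [← FintypeCat.comp_apply, ← D.map_comp, ← op_comp]
  rfl

def toOfBundle : 𝟭 (FintypeCat.{0}ᵒᵖ ⥤ FintypeCat.{0}) ⟶ bundle ⋙ ofBundle where
  app D :=
    { app X := FintypeCat.homMk fun z => ⟨D.map (fromEmpty X.unop).op z,
        FintypeCat.homMk fun x => ⟨D.map (const x).op z, map_fromEmpty_map D _ z⟩⟩
      naturality X Y g := FintypeCat.hom_ext _ _ fun z =>
        ofBundle_obj_ext (π := bundle.obj D) (X := Y) (map_fromEmpty_map D g.unop z)
          fun y => map_const_map D g.unop y z }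
  naturality D D' f := by
    ext X z
    exact ofBundle_obj_ext (π := bundle.obj D') (X := X)
      (FunctorToFintypeCat.naturality _ _ f _ z).symm
      fun _ => (FunctorToFintypeCat.naturality _ _ f _ z).symm

lemma exists_eq_const {I : Type} [Fintype I] {d : I → FintypeCat.{0}}
    (z : (dirichletSum d).obj (op pt)) {i : I} (h : z.1 = i) :
    ∃ a : d i, z = ⟨i, const a⟩ := by
  obtain ⟨j, g⟩ := z
  subst h
  exact ⟨g PUnit.unit, congrArg _ (FintypeCat.hom_ext _ _ fun _ => rfl)⟩

lemma bijective_toOfBundle_app_dirichletSum {I : Type} [Fintype I] (d : I → FintypeCat.{0})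
    (X : FintypeCat.{0}ᵒᵖ) : Function.Bijective ((toOfBundle.app (dirichletSum d)).app X) := by
  refine ⟨?_, ?_⟩
  · rintro ⟨i, g⟩ ⟨j, h⟩ H
    obtain rfl : i = j := congrArg (fun p => p.1.1) H
    refine congrArg _ (FintypeCat.hom_ext _ _ fun x => ?_)
    have hx := congrArg (fun p => (p.2 x).1) H
    exact ConcreteCategory.congr_hom (eq_of_heq (Sigma.mk.inj_iff.1 hx).2) PUnit.unit
  · rintro ⟨⟨i, h⟩, s⟩
    choose a ha using fun x => exists_eq_const (s x).1 (i := i) (congrArg Sigma.fst (s x).2)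
    exact ⟨⟨i, FintypeCat.homMk a⟩, ofBundle_obj_ext (π := bundle.obj (dirichletSum d))
      (congrArg _ (fromEmpty_ext _ _)) fun x => (ha x).symm⟩

lemma isIso_toOfBundle_app {D : FintypeCat.{0}ᵒᵖ ⥤ FintypeCat.{0}} (hD : IsDirichlet D) :
    IsIso (toOfBundle.app D) := by
  obtain ⟨I, _, d, ⟨e⟩⟩ := hD
  have : IsIso (toOfBundle.app (dirichletSum d)) :=
    have := fun X => (ConcreteCategory.isIso_iff_bijective _).2
      (bijective_toOfBundle_app_dirichletSum d X)
    NatIso.isIso_of_isIso_app _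
  have : IsIso (toOfBundle.app D ≫ (bundle ⋙ ofBundle).map e.hom) := by
    rw [← toOfBundle.naturality]
    infer_instance
  exact IsIso.of_isIso_comp_right _ ((bundle ⋙ ofBundle).map e.hom)

end OfBundle

end Dirichlet

open Dirichlet

def DirCart.isoMk {A B : DirCart} (e : A.func ≅ B.func) : A ≅ B where
  hom := ⟨e.hom, fun _ _ g => (NatTrans.Equifibered.of_isIso e.hom g).flip⟩
  inv := ⟨e.inv, fun _ _ g => (NatTrans.Equifibered.of_isIso e.inv g).flip⟩
  hom_inv_id := Subtype.ext e.hom_inv_id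
  inv_hom_id := Subtype.ext e.inv_hom_id

def BunCart.isoMk {A B : BunCart} (e : A.arr ≅ B.arr) : A ≅ B where
  hom := ⟨e.hom, IsPullback.of_horiz_isIso ⟨e.hom.w⟩⟩
  inv := ⟨e.inv, IsPullback.of_horiz_isIso ⟨e.inv.w⟩⟩
  hom_inv_id := Subtype.ext e.hom_inv_id
  inv_hom_id := Subtype.ext e.inv_hom_id

def DirCart.toBunCart : DirCart ⥤ BunCart where
  obj D := ⟨bundle.obj D.func⟩
  map f := ⟨bundle.map f.1, f.2 (fromEmpty pt).op⟩

def BunCart.toDirCart : BunCart ⥤ DirCart where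
  obj π := ⟨ofBundle.obj π.arr, isDirichlet_ofBundle_obj π.arr⟩
  map f := ⟨ofBundle.map f.1, ofBundle_map_cartesian f.1 f.2⟩
  map_id _ := Subtype.ext (ofBundle.map_id _)
  map_comp _ _ := Subtype.ext (ofBundle.map_comp _ _)

def DirCart.unitIso : 𝟭 DirCart ≅ DirCart.toBunCart ⋙ BunCart.toDirCart :=
  NatIso.ofComponents
    (fun D => DirCart.isoMk
      (@asIso _ _ _ _ (toOfBundle.app D.func) (isIso_toOfBundle_app D.isDir)))
    fun f => Subtype.ext (toOfBundle.naturality f.1)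

def BunCart.counitIso : BunCart.toDirCart ⋙ DirCart.toBunCart ≅ 𝟭 BunCart :=
  NatIso.ofComponents (fun π => BunCart.isoMk (ofBundleCompBundle.app π.arr))
    fun f => Subtype.ext (ofBundleCompBundle.hom.naturality f.1)

theorem dirCart_equivalence_pullbackSquares : Nonempty (DirCart ≌ BunCart) :=
  ⟨.mk DirCart.toBunCart BunCart.toDirCart DirCart.unitIso BunCart.counitIso⟩
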